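/- arXiv:math/0104239 — 3 statements merged into one kernel-verified Lean document; each statement's English description precedes it below -/
import Mathlib

section
/- Let T_n(x) = A ∏_{i=1}^m sin^{α_i}((x − x_i)/2) be a real trigonometric polynomial of degree n (A ≠ 0) whose real roots x_1, ..., x_m are pairwise distinct with given positive integer multiplicities α_1, ..., α_m satisfying α_1 + ⋯ + α_m = 2n. Set d = min_{i≠j} |x_i − x_j|. Let c, q, ξ be positive real numbers with q < 1, 2c < ξ, d − 2c > 0, and max_{i≠j} |x_i − x_j| < 2π − 2ξ, and put A₀ = min{ |sin(ξ/2)|, |sin(d/2 − c)| }. Assume c²(4n + α_i(9A₀²/8 − 2)) < A₀² α_i for every i = 1, ..., m. For approximations x_1^{[k]}, ..., x_m^{[k]} define Q_i^{[k]}(x) = ∏_{j=1, j≠i}^m sin^{α_j}((x − x_j^{[k]})/2) and let the iteration be x_i^{[k+1]} = x_i^{[k]} − α_i T_n(x_i^{[k]}) · [ T_n'(x_i^{[k]}) − T_n(x_i^{[k]}) Q_i^{[k]}'(x_i^{[k]}) / Q_i^{[k]}(x_i^{[k]}) ]^{−1} for i = 1, ..., m (assuming at each step that Q_i^{[k]}(x_i^{[k]})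 and the bracketed denominator are nonzero, so the iteration is well defined). If the initial approximations satisfy |x_i^{[0]} − x_i| ≤ c q for every i = 1, ..., m, then for every natural number k the inequalities |x_i^{[k]} − x_i| ≤ c q^{3^k} hold for every i = 1, ..., m. -/
open Real Finset

lemma hasDerivAt_sinpow (w : ℝ) (β : ℕ) (y : ℝ) :
    HasDerivAt (fun t => Real.sin ((t - w) / 2) ^ β)
      ((β : ℝ) * Real.sin ((y - w) / 2) ^ (β - 1) * (Real.cos ((y - w) / 2) / 2)) y := by
  have h1 : HasDerivAt (fun t : ℝ => (t - w) / 2) (1 / 2) y := by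
    simpa using ((hasDerivAt_id y).sub_const w).div_const 2
  have h2 := (Real.hasDerivAt_sin ((y - w) / 2)).comp y h1
  have h3 := h2.pow β
  convert h3 using 1
  · rfl
  · rfl
  · rfl
  simp only [Function.comp]
  ring

lemma hasDerivAt_sinprod {m : ℕ} (α : Fin m → ℕ) (hα : ∀ i, 0 < α i)
    (s : Finset (Fin m)) (w : Fin m → ℝ) (y : ℝ)
    (hne : ∀ j ∈ s, Real.sin ((y - w j) / 2) ≠ 0) :
    HasDerivAt (fun t => ∏ j ∈ s, Real.sin ((t - w j) / 2) ^ α j)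
      ((∏ j ∈ s, Real.sin ((y - w j) / 2) ^ α j) *
        ∑ j ∈ s, (α j : ℝ) / 2 * (Real.cos ((y - w j) / 2) / Real.sin ((y - w j) / 2))) y := by
  have h := HasDerivAt.finset_prod (u := s) (x := y)
    (f := fun j t => Real.sin ((t - w j) / 2) ^ α j)
    (f' := fun j => (α j : ℝ) * Real.sin ((y - w j) / 2) ^ (α j - 1) * (Real.cos ((y - w j) / 2) / 2))
    (fun j _ => hasDerivAt_sinpow (w j) (α j) y)
  convert h using 1
  · rfl
  · rfl
  · ext t; simp
  rw [Finset.mul_sum]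
  refine Finset.sum_congr rfl fun j hj => ?_
  have hsj := hne j hj
  rw [smul_eq_mul, ← Finset.prod_erase_mul s _ hj]
  have hpow : Real.sin ((y - w j) / 2) ^ α j
      = Real.sin ((y - w j) / 2) ^ (α j - 1) * Real.sin ((y - w j) / 2) := by
    rw [← pow_succ, Nat.sub_add_cancel (hα j)]
  rw [hpow]
  field_simp

lemma abs_sub_sin_le (v : ℝ) (hv : |v| ≤ 1) : |v - Real.sin v| ≤ |v| ^ 3 / 4 := by
  rcases lt_trichotomy v 0 with h | h | h
  · have h1 : Real.sin (-v) < -v := Real.sin_lt (by linarith)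
    have h2 : (-v) - (-v) ^ 3 / 4 < Real.sin (-v) := by
      have := Real.sin_gt_sub_cube (x := -v) (by linarith); linarith [pow_pos (neg_pos.mpr h) 3]
    rw [Real.sin_neg] at h1 h2
    rw [abs_of_neg h, abs_of_nonpos (by nlinarith [Real.sin_le_one v] : v - Real.sin v ≤ 0)]
    nlinarith
  · simp [h]
  · have h1 : Real.sin v < v := Real.sin_lt h
    have h2 : v - v ^ 3 / 4 < Real.sin v := by have := Real.sin_gt_sub_cube h; linarith [pow_pos h 3]
    rw [abs_of_pos h, abs_of_pos (by linarith : 0 < v - Real.sin v)]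
    linarith

lemma abs_self_cos_sub_sin_le (v : ℝ) (hv : |v| ≤ 1) :
    |v * Real.cos v - Real.sin v| ≤ 3 / 4 * |v| ^ 3 := by
  have h1 := abs_sub_sin_le v hv
  have h2 : 1 - v ^ 2 / 2 ≤ Real.cos v := Real.one_sub_sq_div_two_le_cos
  have h3 : Real.cos v ≤ 1 := Real.cos_le_one v
  have h4 : |v * Real.cos v - v| ≤ |v| * (v ^ 2 / 2) := by
    rw [show v * Real.cos v - v = v * (Real.cos v - 1) by ring, abs_mul]
    gcongr
    rw [abs_le]; constructor <;> nlinarith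
  calc |v * Real.cos v - Real.sin v| ≤ |v * Real.cos v - v| + |v - Real.sin v| := by
        have := abs_sub_le (v * Real.cos v) v (Real.sin v); linarith
    _ ≤ |v| * (v ^ 2 / 2) + |v| ^ 3 / 4 := by linarith
    _ = 3 / 4 * |v| ^ 3 := by rw [show v ^ 2 = |v| ^ 2 from (sq_abs v).symm]; ring

lemma sin_lb (d c ξ : ℝ) (hc : 0 < c) (hξ : 0 < ξ) (hcξ : 2 * c < ξ)
    (hdc : 0 < d - 2 * c) (hdξ : d < 2 * Real.pi - 2 * ξ)
    (t : ℝ) (h1 : d - 2 * c ≤ |t|) (h2 : |t| ≤ 2 * Real.pi - 2 * ξ + 2 * c) :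
    min |Real.sin (ξ / 2)| |Real.sin (d / 2 - c)| ≤ |Real.sin (t / 2)| := by
  have hπξ : ξ < Real.pi := by linarith
  have habs : |Real.sin (t / 2)| = Real.sin (|t| / 2) := by
    rcases abs_cases t with ⟨h, _⟩ | ⟨h, _⟩
    · rw [h]
      exact abs_of_nonneg (Real.sin_nonneg_of_nonneg_of_le_pi (by positivity) (by nlinarith))
    · rw [h, ← abs_neg, ← Real.sin_neg, ← neg_div]
      exact abs_of_nonneg (Real.sin_nonneg_of_nonneg_of_le_pi (by linarith) (by nlinarith))
  rw [habs]
  set w := |t| / 2 with hw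
  have hw1 : d / 2 - c ≤ w := by rw [hw]; linarith
  have hw2 : w ≤ Real.pi - ξ + c := by rw [hw]; linarith
  have hξ2 : 0 < d / 2 - c := by linarith
  have hsinξ : |Real.sin (ξ / 2)| = Real.sin (ξ / 2) :=
    abs_of_nonneg (Real.sin_nonneg_of_nonneg_of_le_pi (by positivity) (by linarith))
  have hsind : |Real.sin (d / 2 - c)| = Real.sin (d / 2 - c) :=
    abs_of_nonneg (Real.sin_nonneg_of_nonneg_of_le_pi (by positivity) (by nlinarith))
  rw [hsinξ, hsind]
  by_cases hw3 : w ≤ Real.pi / 2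
  · refine le_trans (min_le_right _ _) ?_
    exact Real.sin_le_sin_of_le_of_le_pi_div_two (by nlinarith [Real.pi_pos]) hw3 hw1
  · push_neg at hw3
    refine le_trans (min_le_left _ _) ?_
    rw [show Real.sin w = Real.sin (Real.pi - w) from (Real.sin_pi_sub w).symm]
    have hchain : ξ / 2 ≤ ξ - c := by linarith
    have h4 : ξ - c ≤ Real.pi - w := by linarith
    have h5 : Real.pi - w ≤ Real.pi / 2 := by linarith
    calc Real.sin (ξ / 2) ≤ Real.sin (ξ - c) :=
          Real.sin_le_sin_of_le_of_le_pi_div_two (by nlinarith [Real.pi_pos]) (by linarith) hchain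
      _ ≤ Real.sin (Real.pi - w) :=
          Real.sin_le_sin_of_le_of_le_pi_div_two (by nlinarith [Real.pi_pos]) h5 h4

set_option maxHeartbeats 2000000 in
/-- Theorem 2: cubic convergence of the generalized Obreshkoff–Ehrlich method for a
trigonometric polynomial `T t = A * ∏ i sin^{α i}((t - x i)/2)` of degree `n`
(`A ≠ 0`, `∑ α i = 2 n`) with pairwise distinct real roots `x i` of multiplicities `α i`. -/
theorem generalized_obreshkoff_ehrlich_trigonometric
    (m n : ℕ) (x : Fin m → ℝ) (hx : Function.Injective x)
    (α : Fin m → ℕ) (hα : ∀ i, 0 < α i) (hn : (∑ i, α i) = 2 * n)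
    (A : ℝ) (hA : A ≠ 0)
    (T : ℝ → ℝ) (hT : T = fun t => A * ∏ i, Real.sin ((t - x i) / 2) ^ α i)
    (d c q ξ A₀ : ℝ)
    (hd : IsLeast {r : ℝ | ∃ i j : Fin m, i ≠ j ∧ r = |x i - x j|} d)
    (hc : 0 < c) (hq0 : 0 < q) (hξ : 0 < ξ)
    (hq1 : q < 1) (hcξ : 2 * c < ξ) (hdc : 0 < d - 2 * c)
    (hmax : ∀ i j : Fin m, i ≠ j → |x i - x j| < 2 * Real.pi - 2 * ξ)
    (hA₀ : A₀ = min |Real.sin (ξ / 2)| |Real.sin (d / 2 - c)|)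
    (hineq : ∀ i : Fin m,
      c ^ 2 * (4 * (n : ℝ) + (α i : ℝ) * (9 * A₀ ^ 2 / 8 - 2)) < A₀ ^ 2 * (α i : ℝ))
    (z : ℕ → Fin m → ℝ)
    (Qi : ℕ → Fin m → ℝ → ℝ)
    (hQi : ∀ k i, Qi k i = fun t =>
      ∏ j ∈ Finset.univ \ {i}, Real.sin ((t - z k j) / 2) ^ α j)
    (hQne : ∀ k i, Qi k i (z k i) ≠ 0)
    (hden : ∀ k i,
      deriv T (z k i) - T (z k i) * deriv (Qi k i) (z k i) / Qi k i (z k i) ≠ 0)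
    (hiter : ∀ k i, z (k + 1) i = z k i - (α i : ℝ) * T (z k i) *
      (deriv T (z k i) - T (z k i) * deriv (Qi k i) (z k i) / Qi k i (z k i))⁻¹)
    (h0 : ∀ i, |z 0 i - x i| ≤ c * q) :
    ∀ (k : ℕ) (i : Fin m), |z k i - x i| ≤ c * q ^ 3 ^ k := by
  obtain ⟨⟨i₀, j₀, hij₀, hdeq⟩, hdlb⟩ := hd
  have hπ := Real.pi_pos
  have hdξ : d < 2 * Real.pi - 2 * ξ := hdeq ▸ hmax i₀ j₀ hij₀
  have hπξ : ξ < Real.pi := by linarith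
  have hA₀pos : 0 < A₀ := by
    rw [hA₀]
    apply lt_min <;> rw [abs_pos]
    · exact ne_of_gt (Real.sin_pos_of_pos_of_lt_pi (by linarith) (by linarith))
    · exact ne_of_gt (Real.sin_pos_of_pos_of_lt_pi (by linarith) (by nlinarith))
  have hA₀le1 : A₀ ≤ 1 := by
    rw [hA₀]
    exact le_trans (min_le_left _ _) (Real.abs_sin_le_one (ξ/2))
  have hexj : ∀ i : Fin m, ∃ j : Fin m, j ≠ i := by
    intro i
    by_cases h : i = i₀
    · exact ⟨j₀, by rw [h]; exact fun e => hij₀ e.symm⟩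
    · exact ⟨i₀, fun e => h e.symm⟩
  have hαbd : ∀ i : Fin m, α i + 1 ≤ 2 * n := by
    intro i
    obtain ⟨j, hj⟩ := hexj i
    have hsub : α i + α j ≤ ∑ l, α l := by
      rw [← Finset.sum_pair (Ne.symm hj : i ≠ j)]
      exact Finset.sum_le_sum_of_subset (Finset.subset_univ _)
    have := hα j
    omega
  have hc2 : c ^ 2 < 8 / 9 := by
    have h := hineq i₀
    have hb : (α i₀ : ℝ) + 1 ≤ 2 * (n : ℝ) := by exact_mod_cast hαbd i₀
    have hαpos : (1 : ℝ) ≤ (α i₀ : ℝ) := by exact_mod_cast hα i₀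
    nlinarith [sq_nonneg c, sq_nonneg A₀, mul_pos (mul_pos hA₀pos hA₀pos) (lt_of_lt_of_le one_pos hαpos)]
  have hc1 : c < 1 := by nlinarith

  intro k
  induction k with
  | zero => intro i; simpa using h0 i
  | succ k IH =>
    intro i
    set ε := c * q ^ 3 ^ k with hε
    clear_value ε
    have hεpos : 0 < ε := by rw [hε]; positivity
    have hεc : ε ≤ c * q := by
      rw [hε]
      have h1 : q ^ 3 ^ k ≤ q ^ 1 :=
        pow_le_pow_of_le_one hq0.le hq1.le (Nat.one_le_pow _ _ (by norm_num))
      simpa using mul_le_mul_of_nonneg_left h1 hc.le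
    have hεc' : ε < c := lt_of_le_of_lt hεc (by
      calc c * q < c * 1 := by exact mul_lt_mul_of_pos_left hq1 hc
        _ = c := mul_one c)
    have hgoal_eq : c * q ^ 3 ^ (k + 1) = ε ^ 3 / c ^ 2 := by
      rw [hε, pow_succ, pow_mul]
      field_simp
    rw [hgoal_eq]
    set y := z k i with hy
    clear_value y
    have hyi : |y - x i| ≤ ε := by rw [hy]; exact IH i
    by_cases hsy : Real.sin ((y - x i) / 2) = 0
    · have habs := abs_le.mp hyi
      have h2 : (y - x i) / 2 = 0 := by
        rw [Real.sin_eq_zero_iff_of_lt_of_lt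
          (by linarith only [Real.pi_gt_three, habs.1, hεc', hc1])
          (by linarith only [Real.pi_gt_three, habs.2, hεc', hc1])] at hsy
        exact hsy
      have hyx : y = x i := by linarith
      have hT0 : T y = 0 := by
        rw [hT]
        simp only
        rw [Finset.prod_eq_zero (Finset.mem_univ i) (by
          rw [hyx, show (x i - x i) / 2 = 0 by ring, Real.sin_zero]
          exact zero_pow (hα i).ne'), mul_zero]
      have hit := hiter k i
      rw [← hy, hT0] at hit
      have hz : z (k + 1) i = y := by rw [hit]; ring
      rw [hz, hyx, sub_self, abs_zero]
      positivity
    · have hfarx : ∀ j : Fin m, j ≠ i → A₀ ≤ |Real.sin ((y - x j) / 2)| := by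
        intro j hj
        have hdij : d ≤ |x i - x j| := hdlb ⟨i, j, fun e => hj e.symm, rfl⟩
        have hmij : |x i - x j| < 2 * Real.pi - 2 * ξ := hmax i j (fun e => hj e.symm)
        have htri : |x i - x j| ≤ |x i - y| + |y - x j| := abs_sub_le _ _ _
        have htri2 : |y - x j| ≤ |y - x i| + |x i - x j| := abs_sub_le _ _ _
        have hxy : |x i - y| = |y - x i| := abs_sub_comm _ _
        rw [hA₀]
        exact sin_lb d c ξ hc hξ hcξ hdc hdξ (y - x j) (by linarith) (by linarith)
      have hfarz : ∀ j : Fin m, j ≠ i → A₀ ≤ |Real.sin ((y - z k j) / 2)| := by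
        intro j hj
        have hdij : d ≤ |x i - x j| := hdlb ⟨i, j, fun e => hj e.symm, rfl⟩
        have hmij : |x i - x j| < 2 * Real.pi - 2 * ξ := hmax i j (fun e => hj e.symm)
        have hzj : |z k j - x j| ≤ ε := IH j
        have ht1 : |x i - x j| ≤ |x i - (z k j)| + |z k j - x j| := abs_sub_le _ _ _
        have ht2 : |x i - (z k j)| ≤ |x i - y| + |y - z k j| := abs_sub_le _ _ _
        have ht3 : |y - z k j| ≤ |y - x j| + |x j - z k j| := abs_sub_le _ _ _
        have ht4 : |y - x j| ≤ |y - x i| + |x i - x j| := abs_sub_le _ _ _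
        have hxy : |x i - y| = |y - x i| := abs_sub_comm _ _
        have hxz : |x j - z k j| = |z k j - x j| := abs_sub_comm _ _
        rw [hA₀]
        exact sin_lb d c ξ hc hξ hcξ hdc hdξ (y - z k j) (by linarith) (by linarith)
      have hSne : ∀ j : Fin m, Real.sin ((y - x j) / 2) ≠ 0 := by
        intro j
        by_cases hji : j = i
        · rw [hji]; exact hsy
        · exact abs_pos.mp (lt_of_lt_of_le hA₀pos (hfarx j hji))
      have hZne : ∀ j : Fin m, j ≠ i → Real.sin ((y - z k j) / 2) ≠ 0 := fun j hj =>
        abs_pos.mp (lt_of_lt_of_le hA₀pos (hfarz j hj))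
      have hTyval : T y = A * ∏ j, Real.sin ((y - x j) / 2) ^ α j := by rw [hT]
      have hTy : T y ≠ 0 := by
        rw [hTyval]
        exact mul_ne_zero hA (Finset.prod_ne_zero_iff.mpr fun j _ => pow_ne_zero _ (hSne j))
      have hdT : HasDerivAt T (A * ((∏ j, Real.sin ((y - x j) / 2) ^ α j) *
          ∑ j, (α j : ℝ) / 2 * (Real.cos ((y - x j) / 2) / Real.sin ((y - x j) / 2)))) y := by
        rw [hT]
        exact (hasDerivAt_sinprod α hα Finset.univ x y (fun j _ => hSne j)).const_mul A
      have hderivT : deriv T y = T y *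
          ∑ j, (α j : ℝ) / 2 * (Real.cos ((y - x j) / 2) / Real.sin ((y - x j) / 2)) := by
        rw [hdT.deriv, hTyval]; ring
      have hQyval : Qi k i y = ∏ j ∈ Finset.univ \ {i}, Real.sin ((y - z k j) / 2) ^ α j := by
        rw [hQi k i]
      have hdQ : HasDerivAt (Qi k i)
          ((∏ j ∈ Finset.univ \ {i}, Real.sin ((y - z k j) / 2) ^ α j) *
            ∑ j ∈ Finset.univ \ {i}, (α j : ℝ) / 2 *
              (Real.cos ((y - z k j) / 2) / Real.sin ((y - z k j) / 2))) y := by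
        rw [hQi k i]
        exact hasDerivAt_sinprod α hα _ (z k) y
          (fun j hj => hZne j (Finset.notMem_singleton.mp (Finset.mem_sdiff.mp hj).2))
      have hQyne : Qi k i y ≠ 0 := by rw [hy]; exact hQne k i
      have hQprodne : (∏ j ∈ Finset.univ \ {i}, Real.sin ((y - z k j) / 2) ^ α j) ≠ 0 := by
        rw [← hQyval]; exact hQyne
      set u := (y - x i) / 2 with hu
      clear_value u
      have hsu : Real.sin u ≠ 0 := hsy
      set S := ∑ j ∈ Finset.univ \ {i}, (α j : ℝ) / 2 *
        (Real.cos ((y - x j) / 2) / Real.sin ((y - x j) / 2)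
          - Real.cos ((y - z k j) / 2) / Real.sin ((y - z k j) / 2)) with hS
      clear_value S
      have hSsub : S = (∑ j ∈ Finset.univ \ {i}, (α j : ℝ) / 2 *
            (Real.cos ((y - x j) / 2) / Real.sin ((y - x j) / 2)))
          - ∑ j ∈ Finset.univ \ {i}, (α j : ℝ) / 2 *
            (Real.cos ((y - z k j) / 2) / Real.sin ((y - z k j) / 2)) := by
        rw [hS, ← Finset.sum_sub_distrib]
        exact Finset.sum_congr rfl fun j _ => by ring
      have hsplit : (∑ j, (α j : ℝ) / 2 * (Real.cos ((y - x j) / 2) / Real.sin ((y - x j) / 2)))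
          = (α i : ℝ) / 2 * (Real.cos u / Real.sin u)
            + ∑ j ∈ Finset.univ \ {i}, (α j : ℝ) / 2 *
                (Real.cos ((y - x j) / 2) / Real.sin ((y - x j) / 2)) := by
        rw [← Finset.add_sum_erase Finset.univ _ (Finset.mem_univ i), Finset.erase_eq, ← hu]
      set W := (α i : ℝ) / 2 * (Real.cos u / Real.sin u) + S with hW
      clear_value W
      have hDval : deriv T y - T y * deriv (Qi k i) y / Qi k i y = T y * W := by
        rw [hderivT, hdQ.deriv, hQyval, mul_div_assoc,
          mul_div_cancel_left₀ _ hQprodne, hW, hSsub, hsplit]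
        ring
      have hdenk := hden k i
      rw [← hy, hDval] at hdenk
      have hWne : W ≠ 0 := fun h => hdenk (by rw [h, mul_zero])
      set E := (α i : ℝ) * Real.cos u + 2 * S * Real.sin u with hE
      clear_value E
      have hWE : W = E / (2 * Real.sin u) := by
        rw [hW, hE]; field_simp
      have hEne : E ≠ 0 := by
        intro h
        exact hWne (by rw [hWE, h, zero_div])
      have hit := hiter k i
      rw [← hy, hDval] at hit
      have hkey : z (k + 1) i - x i =
          (2 * (α i : ℝ) * (u * Real.cos u - Real.sin u) + 4 * u * S * Real.sin u) / E := by
        rw [hit]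
        have h1 : (α i : ℝ) * T y * (T y * W)⁻¹ = (α i : ℝ) / W := by
          rw [mul_inv]
          field_simp [hTy, hWne]
        have hyx2 : y - x i = 2 * u := by rw [hu]; ring
        have h2 : y - (α i : ℝ) * T y * (T y * W)⁻¹ - x i = 2 * u - (α i : ℝ) / W := by
          rw [h1]; linarith [hyx2]
        have hEne' : (α i : ℝ) * Real.cos u + 2 * S * Real.sin u ≠ 0 := by rw [← hE]; exact hEne
        rw [h2, hWE, div_div_eq_mul_div]
        field_simp [hEne']
        rw [hE]
        ring
      have hu2 : |u| ≤ ε / 2 := by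
        rw [hu, abs_div, abs_two]
        linarith [hyi]
      have hu1 : |u| ≤ 1 := by linarith
      set B := 2 * (n : ℝ) - (α i : ℝ) with hB
      clear_value B
      have hαr : (1 : ℝ) ≤ (α i : ℝ) := by exact_mod_cast hα i
      have hB1 : (1 : ℝ) ≤ B := by
        have hb := hαbd i
        have hb' : (α i : ℝ) + 1 ≤ 2 * (n : ℝ) := by exact_mod_cast hb
        rw [hB]; linarith
      have hsumα : ∑ j ∈ Finset.univ \ {i}, (α j : ℝ) = B := by
        have h1 : α i + ∑ j ∈ Finset.univ.erase i, α j = 2 * n := by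
          rw [Finset.add_sum_erase _ _ (Finset.mem_univ i), hn]
        have h2 : (α i : ℝ) + ∑ j ∈ Finset.univ.erase i, (α j : ℝ) = 2 * (n : ℝ) := by
          exact_mod_cast h1
        rw [← Finset.erase_eq, hB]; linarith
      have hterm : ∀ j ∈ Finset.univ \ {i}, |(α j : ℝ) / 2 *
          (Real.cos ((y - x j) / 2) / Real.sin ((y - x j) / 2)
            - Real.cos ((y - z k j) / 2) / Real.sin ((y - z k j) / 2))|
          ≤ (α j : ℝ) / 2 * (ε / (2 * A₀ ^ 2)) := by
        intro j hj
        have hji : j ≠ i := Finset.notMem_singleton.mp (Finset.mem_sdiff.mp hj).2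
        have hx1 := hSne j
        have hz1 := hZne j hji
        have hid : Real.cos ((y - x j) / 2) / Real.sin ((y - x j) / 2)
            - Real.cos ((y - z k j) / 2) / Real.sin ((y - z k j) / 2)
            = Real.sin ((x j - z k j) / 2) /
              (Real.sin ((y - x j) / 2) * Real.sin ((y - z k j) / 2)) := by
          rw [show (x j - z k j) / 2 = (y - z k j) / 2 - (y - x j) / 2 by ring, Real.sin_sub]
          field_simp
        rw [hid, abs_mul, abs_of_nonneg (by positivity : (0:ℝ) ≤ (α j : ℝ) / 2),
          abs_div, abs_mul]
        have hnum : |Real.sin ((x j - z k j) / 2)| ≤ ε / 2 := by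
          refine le_trans Real.abs_sin_le_abs ?_
          rw [abs_div, abs_two]
          have hzx := IH j
          rw [abs_sub_comm] at hzx
          linarith
        have hden2 : A₀ ^ 2 ≤ |Real.sin ((y - x j) / 2)| * |Real.sin ((y - z k j) / 2)| := by
          have ha := hfarx j hji
          have hb := hfarz j hji
          nlinarith only [ha, hb, hA₀pos, abs_nonneg (Real.sin ((y - x j) / 2))]
        have hfrac : |Real.sin ((x j - z k j) / 2)| /
            (|Real.sin ((y - x j) / 2)| * |Real.sin ((y - z k j) / 2)|)
            ≤ (ε / 2) / A₀ ^ 2 := by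
          apply div_le_div₀ (by positivity) hnum (by positivity) hden2
        calc (α j : ℝ) / 2 * (|Real.sin ((x j - z k j) / 2)| /
              (|Real.sin ((y - x j) / 2)| * |Real.sin ((y - z k j) / 2)|))
            ≤ (α j : ℝ) / 2 * ((ε / 2) / A₀ ^ 2) :=
              mul_le_mul_of_nonneg_left hfrac (by positivity)
          _ = (α j : ℝ) / 2 * (ε / (2 * A₀ ^ 2)) := by ring
      have hSbd : |S| ≤ B * ε / (4 * A₀ ^ 2) := by
        rw [hS]
        refine le_trans (Finset.abs_sum_le_sum_abs _ _) ?_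
        refine le_trans (Finset.sum_le_sum hterm) ?_
        rw [← Finset.sum_mul, ← Finset.sum_div, hsumα]
        ring_nf
        exact le_refl _
      have hcos : 1 - c ^ 2 / 8 ≤ Real.cos u := by
        have h1 : 1 - u ^ 2 / 2 ≤ Real.cos u := Real.one_sub_sq_div_two_le_cos
        have h2 : |u| ≤ c / 2 := by linarith
        have h3 : u ^ 2 ≤ c ^ 2 / 4 := by
          nlinarith only [h2, sq_abs u, abs_nonneg u, hc]
        linarith
      have hsinu : |Real.sin u| ≤ |u| := Real.abs_sin_le_abs
      have h2s : |2 * S * Real.sin u| ≤ B * c ^ 2 / (4 * A₀ ^ 2) := by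
        rw [abs_mul, abs_mul, abs_two]
        have h₁ : |Real.sin u| ≤ ε / 2 := le_trans hsinu hu2
        calc 2 * |S| * |Real.sin u| ≤ 2 * (B * ε / (4 * A₀ ^ 2)) * (ε / 2) := by
              apply mul_le_mul (mul_le_mul_of_nonneg_left hSbd (by norm_num)) h₁
                (abs_nonneg _) (by positivity)
          _ = B * ε ^ 2 / (4 * A₀ ^ 2) := by ring
          _ ≤ B * c ^ 2 / (4 * A₀ ^ 2) := by
              apply div_le_div_of_nonneg_right ?_ (by positivity)
              have hsq : ε ^ 2 ≤ c ^ 2 := by nlinarith only [hεc', hεpos]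
              exact mul_le_mul_of_nonneg_left hsq (by linarith only [hB1])
      have hA2 : (0 : ℝ) < A₀ ^ 2 := by positivity
      have hΔE : (α i : ℝ) * (1 - c ^ 2 / 8) - B * c ^ 2 / (4 * A₀ ^ 2) ≤ E := by
        rw [hE]
        have h2s' := (abs_le.mp h2s).1
        linarith only [h2s',
          mul_le_mul_of_nonneg_left hcos (by linarith only [hαr] : (0:ℝ) ≤ (α i : ℝ))]
      have h4n : 4 * (n : ℝ) = 2 * B + 2 * (α i : ℝ) := by rw [hB]; ring
      have hΔpos : 0 < (α i : ℝ) * (1 - c ^ 2 / 8) - B * c ^ 2 / (4 * A₀ ^ 2) := by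
        have h := hineq i
        rw [h4n] at h
        rw [sub_pos, div_lt_iff₀ (by positivity : (0:ℝ) < 4 * A₀ ^ 2)]
        nlinarith only [h, mul_pos hA2 (lt_of_lt_of_le one_pos hαr),
          mul_nonneg (mul_nonneg (sq_nonneg c) hA2.le)
            (le_trans zero_le_one hαr)]
      have hEpos : 0 < E := lt_of_lt_of_le hΔpos hΔE
      have hucs : |u * Real.cos u - Real.sin u| ≤ 3 / 4 * |u| ^ 3 := abs_self_cos_sub_sin_le u hu1
      have hNum : |2 * (α i : ℝ) * (u * Real.cos u - Real.sin u) + 4 * u * S * Real.sin u|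
          ≤ 3 / 16 * (α i : ℝ) * ε ^ 3 + B * ε ^ 3 / (4 * A₀ ^ 2) := by
        have ht1 : |2 * (α i : ℝ) * (u * Real.cos u - Real.sin u)|
            ≤ 3 / 16 * (α i : ℝ) * ε ^ 3 := by
          rw [abs_mul, abs_of_nonneg (by positivity : (0:ℝ) ≤ 2 * (α i : ℝ))]
          have h3 : |u| ^ 3 ≤ (ε / 2) ^ 3 := pow_le_pow_left₀ (abs_nonneg u) hu2 3
          calc 2 * (α i : ℝ) * |u * Real.cos u - Real.sin u|
              ≤ 2 * (α i : ℝ) * (3 / 4 * (ε / 2) ^ 3) := by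
                apply mul_le_mul_of_nonneg_left ?_ (by positivity)
                linarith
            _ = 3 / 16 * (α i : ℝ) * ε ^ 3 := by ring
        have ht2 : |4 * u * S * Real.sin u| ≤ B * ε ^ 3 / (4 * A₀ ^ 2) := by
          rw [abs_mul, abs_mul, abs_mul, abs_of_nonneg (by norm_num : (0:ℝ) ≤ 4)]
          have h₁ : |Real.sin u| ≤ ε / 2 := le_trans hsinu hu2
          calc 4 * |u| * |S| * |Real.sin u|
              ≤ 4 * (ε / 2) * (B * ε / (4 * A₀ ^ 2)) * (ε / 2) := by
                gcongr <;> positivity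
            _ = B * ε ^ 3 / (4 * A₀ ^ 2) := by ring
        calc |2 * (α i : ℝ) * (u * Real.cos u - Real.sin u) + 4 * u * S * Real.sin u|
            ≤ |2 * (α i : ℝ) * (u * Real.cos u - Real.sin u)| + |4 * u * S * Real.sin u| :=
              abs_add_le _ _
          _ ≤ 3 / 16 * (α i : ℝ) * ε ^ 3 + B * ε ^ 3 / (4 * A₀ ^ 2) := by linarith
      have hKpos : (0 : ℝ) < 4 * A₀ ^ 2 := by positivity
      have key : (3 / 16 * (α i : ℝ) * ε ^ 3 + B * ε ^ 3 / (4 * A₀ ^ 2)) * c ^ 2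
          ≤ ε ^ 3 * ((α i : ℝ) * (1 - c ^ 2 / 8) - B * c ^ 2 / (4 * A₀ ^ 2)) := by
        have hε3 : (0 : ℝ) < ε ^ 3 := by positivity
        have base : c ^ 2 * (3 / 4 * A₀ ^ 2 * (α i : ℝ) + B)
            ≤ 4 * A₀ ^ 2 * ((α i : ℝ) * (1 - c ^ 2 / 8)) - B * c ^ 2 := by
          have h := hineq i
          rw [h4n] at h
          nlinarith only [h, mul_pos hA2 (lt_of_lt_of_le one_pos hαr),
            mul_lt_mul_of_pos_right hc2 (mul_pos hA2 (lt_of_lt_of_le one_pos hαr))]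
        apply le_of_mul_le_mul_right ?_ hKpos
        calc (3 / 16 * (α i : ℝ) * ε ^ 3 + B * ε ^ 3 / (4 * A₀ ^ 2)) * c ^ 2 * (4 * A₀ ^ 2)
            = (c ^ 2 * (3 / 4 * A₀ ^ 2 * (α i : ℝ) + B)) * ε ^ 3 := by
              field_simp
              ring
          _ ≤ (4 * A₀ ^ 2 * ((α i : ℝ) * (1 - c ^ 2 / 8)) - B * c ^ 2) * ε ^ 3 := by
              apply mul_le_mul_of_nonneg_right base hε3.le
          _ = ε ^ 3 * ((α i : ℝ) * (1 - c ^ 2 / 8) - B * c ^ 2 / (4 * A₀ ^ 2)) * (4 * A₀ ^ 2) := by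
              field_simp
      rw [hkey, abs_div, abs_of_pos hEpos,
        div_le_div_iff₀ hEpos (by positivity : (0:ℝ) < c ^ 2)]
      calc |2 * (α i : ℝ) * (u * Real.cos u - Real.sin u) + 4 * u * S * Real.sin u| * c ^ 2
          ≤ (3 / 16 * (α i : ℝ) * ε ^ 3 + B * ε ^ 3 / (4 * A₀ ^ 2)) * c ^ 2 :=
            mul_le_mul_of_nonneg_right hNum (by positivity)
        _ ≤ ε ^ 3 * ((α i : ℝ) * (1 - c ^ 2 / 8) - B * c ^ 2 / (4 * A₀ ^ 2)) := key
        _ ≤ ε ^ 3 * E := mul_le_mul_of_nonneg_left hΔE (by positivity)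
end

section
/- Let E_n(x) = A ∏_{i=1}^m sinh^{α_i}((x − x_i)/2) be a real exponential polynomial of degree n (A ≠ 0) whose real roots x_1, ..., x_m are pairwise distinct with given positive integer multiplicities α_1, ..., α_m satisfying α_1 + ⋯ + α_m = 2n. Set d = min_{i≠j} |x_i − x_j| and S = sinh((d − 2c)/2). Let q, c be real numbers with 0 < q < 1, c > 0, d − 2c > 0, and c²(4n + (S² − 2)α_i) < S² α_i for every i = 1, ..., m. For approximations x_1^{[k]}, ..., x_m^{[k]} define Q_i^{[k]}(x) = ∏_{j=1, j≠i}^m sinh^{α_j}((x − x_j^{[k]})/2) and let the iteration be x_i^{[k+1]} = x_i^{[k]} − α_i E_n(x_i^{[k]}) · [ E_n'(x_i^{[k]}) − E_n(x_i^{[k]}) Q_i^{[k]}'(x_i^{[k]}) / Q_i^{[k]}(x_i^{[k]}) ]^{−1} for i = 1, ..., m (assuming at each step that Q_i^{[k]}(x_i^{[k]}) and the bracketed denominator are nonzero, so the iteration is well defined). If the initial approximations satisfy |x_i^{[0]} − x_i| ≤ c q for every i = 1, ..., m, then for every natural number k the inequalities |x_i^{[k]} − x_i| ≤ c q^{3^k}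 hold for every i = 1, ..., m. -/
open Real Finset

lemma exp_est {y : ℝ} (hy : |y| ≤ 1) :
    |Real.exp y - (1 + y + y^2/2 + y^3/6)| ≤ |y|^4 * (5/96) := by
  have h := Real.exp_bound hy (by norm_num : (0:ℕ) < 4)
  norm_num [Finset.sum_range_succ, Nat.factorial] at h
  convert h using 3

lemma coth_core {t : ℝ} (h0 : 0 < t) (h2 : t ≤ 1/2) :
    Real.sinh t ≤ t * Real.cosh t ∧ t * Real.cosh t ≤ (1 + t^2) * Real.sinh t := by
  have ha : |t| ≤ 1 := by rw [abs_of_pos h0]; linarith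
  have hb : |(-t)| ≤ 1 := by rwa [abs_neg]
  have e1 := abs_le.mp (exp_est ha)
  have e2 := abs_le.mp (exp_est hb)
  rw [abs_of_pos h0] at e1
  rw [abs_neg, abs_of_pos h0] at e2
  have hs : 2*t + t^3/3 - t^4*(5/48) ≤ rexp t - rexp (-t) := by
    ring_nf; ring_nf at e1 e2; linarith [e1.1, e2.2]
  have hc : rexp t + rexp (-t) ≤ 2 + t^2 + t^4*(5/48) := by
    ring_nf; ring_nf at e1 e2; linarith [e1.2, e2.2]
  rw [Real.sinh_eq, Real.cosh_eq]
  constructor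
  · nlinarith [mul_le_mul_of_nonneg_left hc h0.le, pow_pos h0 3, pow_pos h0 4, pow_pos h0 5]
  · have m1 := mul_le_mul_of_nonneg_left hc h0.le
    have m2 := mul_le_mul_of_nonneg_left hs (by positivity : (0:ℝ) ≤ 1 + t^2)
    nlinarith [m1, m2, pow_pos h0 3, pow_pos h0 4, pow_pos h0 5, pow_pos h0 6]

lemma sinh_upper {y : ℝ} (h0 : 0 ≤ y) (h2 : y ≤ 1/2) : Real.sinh y ≤ 6/5 * y := by
  have ha : |y| ≤ 1 := by rw [abs_of_nonneg h0]; linarith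
  have hb : |(-y)| ≤ 1 := by rwa [abs_neg]
  have e1 := abs_le.mp (exp_est ha)
  have e2 := abs_le.mp (exp_est hb)
  rw [abs_of_nonneg h0] at e1
  rw [abs_neg, abs_of_nonneg h0] at e2
  rw [Real.sinh_eq]
  nlinarith [pow_nonneg h0 3, pow_nonneg h0 4, e1.2, e2.1]

lemma coth_bounds {t : ℝ} (ht : t ≠ 0) (h2 : |t| ≤ 1/2) :
    1 ≤ t * (Real.cosh t / Real.sinh t) ∧ t * (Real.cosh t / Real.sinh t) ≤ 1 + t^2 := by
  have habs : t * (Real.cosh t / Real.sinh t) = |t| * (Real.cosh |t| / Real.sinh |t|) := by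
    rcases le_or_gt 0 t with h | h
    · rw [abs_of_nonneg h]
    · rw [abs_of_neg h, Real.cosh_neg, Real.sinh_neg, div_neg, mul_neg]; ring
  have h0 : 0 < |t| := abs_pos.mpr ht
  obtain ⟨c1, c2⟩ := coth_core h0 h2
  have hs : 0 < Real.sinh |t| := Real.sinh_pos_iff.mpr h0
  rw [habs]
  constructor
  · rw [mul_div_assoc', le_div_iff₀ hs, one_mul]; exact c1
  · rw [mul_div_assoc', div_le_iff₀ hs, ← sq_abs t]; exact c2

lemma hasDerivAt_sinh_aff (w u : ℝ) :
    HasDerivAt (fun t => Real.sinh ((t - w)/2)) (Real.cosh ((u - w)/2) * (1/2)) u := by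
  have h1 : HasDerivAt (fun t : ℝ => (t - w)/2) (1/2) u := by
    simpa using ((hasDerivAt_id u).sub_const w).div_const 2
  exact (Real.hasDerivAt_sinh ((u - w)/2)).comp u h1

lemma diff_factor (w u : ℝ) (a : ℕ) :
    DifferentiableAt ℝ (fun t => Real.sinh ((t - w)/2) ^ a) u :=
  ((hasDerivAt_sinh_aff w u).differentiableAt).pow a

lemma logDeriv_factor (w u : ℝ) (a : ℕ) (hs : Real.sinh ((u - w)/2) ≠ 0) :
    logDeriv (fun t => Real.sinh ((t - w)/2) ^ a) u
      = (a : ℝ)/2 * (Real.cosh ((u - w)/2) / Real.sinh ((u - w)/2)) := by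
  have hdf : DifferentiableAt ℝ (fun t => Real.sinh ((t - w)/2)) u :=
    (hasDerivAt_sinh_aff w u).differentiableAt
  have h := logDeriv_fun_pow (f := fun t => Real.sinh ((t - w)/2)) (x := u) hdf a
  rw [show (fun t => Real.sinh ((t - w)/2) ^ a)
      = ((fun t => Real.sinh ((t - w)/2)) · ^ a) from rfl, h, logDeriv_apply,
    (hasDerivAt_sinh_aff w u).deriv]
  field_simp

lemma logDeriv_prod_sinh {m : ℕ} (s : Finset (Fin m)) (w : Fin m → ℝ) (α : Fin m → ℕ) (u : ℝ)
    (h : ∀ j ∈ s, Real.sinh ((u - w j)/2) ≠ 0) :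
    logDeriv (fun t => ∏ j ∈ s, Real.sinh ((t - w j)/2) ^ (α j)) u
      = ∑ j ∈ s, (α j : ℝ)/2 * (Real.cosh ((u - w j)/2) / Real.sinh ((u - w j)/2)) := by
  have h1 := logDeriv_prod (s := s) (f := fun j t => Real.sinh ((t - w j)/2) ^ (α j)) (x := u)
      (fun j hj => pow_ne_zero _ (h j hj)) (fun j hj => diff_factor (w j) u (α j))
  rw [← Finset.sum_congr rfl (fun j hj => logDeriv_factor (w j) u (α j) (h j hj))]
  exact h1
lemma num_plow (a b S c r : ℝ) (ha0 : 0 < a) (hS0 : 0 < S) (hr0 : 0 < r) (hrc : r < c)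
    (hb : 0 ≤ b) (hkey : 2*c^2*b < a*S^2*(1-c^2)) :
    b * (3*r/10) * r < a * S^2 := by
  have hmono : b*r^2 ≤ b*c^2 :=
    mul_le_mul_of_nonneg_left (pow_le_pow_left₀ hr0.le hrc.le 2) hb
  nlinarith [hmono, hkey, mul_nonneg (mul_nonneg ha0.le (sq_nonneg S)) (sq_nonneg c),
    mul_pos ha0 (pow_pos hS0 2)]

lemma num_fin (a b S c r : ℝ) (ha0 : 0 < a) (hS0 : 0 < S) (hr0 : 0 < r) (hrc : r < c)
    (hc1 : c < 1) (hc0 : 0 < c) (hb : 0 ≤ b) (hkey : 2*c^2*b < a*S^2*(1-c^2)) :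
    0 ≤ a*r^2*S^2 - b*(3*r^4/10) - a*r^2*c^2*S^2/4 - b*(3*r^2*c^2/10) := by
  have hm2 : b*r^2*r^2 ≤ b*r^2*c^2 :=
    mul_le_mul_of_nonneg_left (pow_le_pow_left₀ hr0.le hrc.le 2)
      (mul_nonneg hb (sq_nonneg r))
  have hk2 : 2*c^2*b*r^2 ≤ a*S^2*(1-c^2)*r^2 :=
    mul_le_mul_of_nonneg_right hkey.le (sq_nonneg r)
  have p5 : 0 ≤ (1-c^2) * (a*r^2*S^2) :=
    mul_nonneg (by nlinarith) (by positivity)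
  have p6 : 0 ≤ a*r^2*S^2 := by positivity
  have p7 : 0 ≤ a*r^2*c^2*S^2 := by positivity
  nlinarith [hm2, hk2, p5, p6, p7]

lemma num_fcx (a e X' : ℝ) (ha0 : 0 < a) (habs1 : 1 ≤ e/2 * X') : a ≤ a/2*X'*e := by
  nlinarith

lemma num_quad (e r y : ℝ) (h2 : e/2 * y ≤ 1 + (e/2)^2) (he : e^2 ≤ r^2) :
    e/2 * y - 1 ≤ r^2/4 := by nlinarith

set_option maxHeartbeats 2000000 in
lemma one_step {m n : ℕ} (x : Fin m → ℝ) (α : Fin m → ℕ) (hα : ∀ i, 0 < α i)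
    (hn : (∑ i, α i) = 2 * n) (A : ℝ) (hA : A ≠ 0)
    (d c q S ρ : ℝ)
    (hdlb : ∀ i j : Fin m, i ≠ j → d ≤ |x i - x j|)
    (hq0 : 0 < q) (hq1 : q < 1) (hc : 0 < c) (hdc : 0 < d - 2 * c)
    (hS : S = Real.sinh ((d - 2 * c) / 2))
    (hineq : ∀ i : Fin m, c ^ 2 * (4 * (n : ℝ) + (S ^ 2 - 2) * (α i : ℝ)) < S ^ 2 * (α i : ℝ))
    (zc : Fin m → ℝ) (i : Fin m)
    (hρ0 : 0 < ρ) (hρq : ρ ≤ c * q)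
    (herr : ∀ j, |zc j - x j| ≤ ρ)
    (znext : ℝ)
    (hit : znext = zc i - (α i : ℝ) *
        ((fun t => A * ∏ j, Real.sinh ((t - x j)/2) ^ α j) (zc i)) *
      (deriv (fun t => A * ∏ j, Real.sinh ((t - x j)/2) ^ α j) (zc i)
        - (fun t => A * ∏ j, Real.sinh ((t - x j)/2) ^ α j) (zc i)
          * deriv (fun t => ∏ j ∈ Finset.univ \ {i}, Real.sinh ((t - zc j)/2) ^ α j) (zc i)
          / (fun t => ∏ j ∈ Finset.univ \ {i}, Real.sinh ((t - zc j)/2) ^ α j) (zc i))⁻¹) :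
    |znext - x i| ≤ ρ^3 / c^2 := by
  have hS0 : 0 < S := by rw [hS]; exact Real.sinh_pos_iff.mpr (by linarith)
  have ha1 : (1:ℝ) ≤ (α i : ℝ) := by exact_mod_cast hα i
  have ha0 : (0:ℝ) < (α i : ℝ) := by linarith
  have ha2n : (α i : ℝ) ≤ 2 * n := by
    have := Finset.single_le_sum (f := fun j => α j) (fun j _ => Nat.zero_le _) (mem_univ i)
    rw [hn] at this; exact_mod_cast this
  have hc1 : c < 1 := by
    by_contra hcon
    push_neg at hcon
    have p1 : 0 ≤ (c^2 - 1) * (S^2 * (α i:ℝ)) :=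
      mul_nonneg (by nlinarith) (by positivity)
    have p2 : 0 ≤ c^2 * (4*(n:ℝ) - 2*(α i:ℝ)) := mul_nonneg (by positivity) (by linarith)
    nlinarith [hineq i, p1, p2]
  have hρc : ρ < c := lt_of_le_of_lt hρq (by nlinarith [mul_lt_mul_of_pos_left hq1 hc])
  have hkey : 2 * c^2 * (2*(n:ℝ) - α i) < (α i : ℝ) * S^2 * (1 - c^2) := by
    nlinarith [hineq i]
  set u := zc i with hu
  set ε := u - x i with hε
  by_cases hε0 : ε = 0
  · have hsin0 : Real.sinh ((u - x i)/2) = 0 := by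
      rw [← hε, hε0]; simp
    have hEu : (A * ∏ j, Real.sinh ((u - x j)/2) ^ α j) = 0 := by
      rw [Finset.prod_eq_zero (mem_univ i) (by rw [hsin0]; exact zero_pow (hα i).ne')]
      ring
    have hzn : znext = u := by rw [hit]; simp only [hEu]; ring
    rw [hzn, ← hε, hε0, abs_zero]; positivity
  -- main case
  have hερ : |ε| ≤ ρ := herr i
  have hεa : 0 < |ε| := abs_pos.mpr hε0
  have hsAi : Real.sinh ((u - x i)/2) ≠ 0 := by
    rw [← hε, Real.sinh_ne_zero]
    exact div_ne_zero hε0 two_ne_zero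
  have hfar : ∀ j, j ≠ i → d - 2*c ≤ |u - x j| ∧ d - 2*c ≤ |u - zc j| := by
    intro j hj
    have h1 : d ≤ |x i - x j| := hdlb i j (Ne.symm hj)
    have h2 := herr j
    constructor
    · have h3 : |x i - x j| ≤ |u - x j| + |ε| := by
        calc |x i - x j| = |(u - x j) + -ε| := by rw [hε]; congr 1; ring
          _ ≤ |u - x j| + |(-ε)| := abs_add_le _ _
          _ = |u - x j| + |ε| := by rw [abs_neg]
      linarith
    · have h3 : |x i - x j| ≤ |u - zc j| + |zc j - x j| + |ε| := by
        calc |x i - x j| = |(u - zc j) + (zc j - x j) + -ε| := by rw [hε]; congr 1; ring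
          _ ≤ |(u - zc j) + (zc j - x j)| + |(-ε)| := abs_add_le _ _
          _ ≤ |u - zc j| + |zc j - x j| + |(-ε)| := by linarith [abs_add_le (u - zc j) (zc j - x j)]
          _ = |u - zc j| + |zc j - x j| + |ε| := by rw [abs_neg]
      linarith
  have hsinlb : ∀ w : ℝ, d - 2*c ≤ |w| → S ≤ |Real.sinh (w/2)| := by
    intro w hw
    rw [Real.abs_sinh, hS]
    apply Real.sinh_le_sinh.mpr
    rw [abs_div, abs_two]
    linarith
  have hsA : ∀ j, Real.sinh ((u - x j)/2) ≠ 0 := by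
    intro j
    by_cases hj : j = i
    · rw [hj]; exact hsAi
    · intro h0'
      have := hsinlb _ (hfar j hj).1
      rw [h0', abs_zero] at this; linarith
  have hsB : ∀ j, j ≠ i → Real.sinh ((u - zc j)/2) ≠ 0 := by
    intro j hj h0'
    have := hsinlb _ (hfar j hj).2
    rw [h0', abs_zero] at this; linarith
  have hEu0 : (A * ∏ j, Real.sinh ((u - x j)/2) ^ α j) ≠ 0 :=
    mul_ne_zero hA (Finset.prod_ne_zero_iff.mpr fun j _ => pow_ne_zero _ (hsA j))
  have hQu0 : (∏ j ∈ Finset.univ \ {i}, Real.sinh ((u - zc j)/2) ^ α j) ≠ 0 :=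
    Finset.prod_ne_zero_iff.mpr fun j hj => pow_ne_zero _
      (hsB j (Finset.notMem_singleton.mp (Finset.mem_sdiff.mp hj).2))
  set L := ∑ j, (α j : ℝ)/2 * (Real.cosh ((u - x j)/2) / Real.sinh ((u - x j)/2)) with hLdef
  set M := ∑ j ∈ Finset.univ \ {i},
      (α j : ℝ)/2 * (Real.cosh ((u - zc j)/2) / Real.sinh ((u - zc j)/2)) with hMdef
  have hdE : deriv (fun t => A * ∏ j, Real.sinh ((t - x j)/2) ^ α j) u
      = (A * ∏ j, Real.sinh ((u - x j)/2) ^ α j) * L := by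
    have h1 : logDeriv (fun t => A * ∏ j, Real.sinh ((t - x j)/2) ^ α j) u = L := by
      rw [logDeriv_const_mul (f := fun t => ∏ j, Real.sinh ((t - x j)/2) ^ α j) u A hA]
      exact logDeriv_prod_sinh Finset.univ x α u (fun j _ => hsA j)
    rw [logDeriv_apply, div_eq_iff hEu0] at h1
    rw [h1]; ring
  have hdQ : deriv (fun t => ∏ j ∈ Finset.univ \ {i}, Real.sinh ((t - zc j)/2) ^ α j) u
      = (∏ j ∈ Finset.univ \ {i}, Real.sinh ((u - zc j)/2) ^ α j) * M := by
    have h1 : logDeriv (fun t => ∏ j ∈ Finset.univ \ {i},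
        Real.sinh ((t - zc j)/2) ^ α j) u = M := by
      exact logDeriv_prod_sinh (Finset.univ \ {i}) zc α u
        (fun j hj => hsB j (Finset.notMem_singleton.mp (Finset.mem_sdiff.mp hj).2))
    rw [logDeriv_apply, div_eq_iff hQu0] at h1
    rw [h1]; ring
  set G := L - M with hGdef
  set R := ∑ j ∈ Finset.univ \ {i},
      ((α j : ℝ)/2 * (Real.cosh ((u - x j)/2) / Real.sinh ((u - x j)/2))
        - (α j : ℝ)/2 * (Real.cosh ((u - zc j)/2) / Real.sinh ((u - zc j)/2))) with hRdef
  set X := Real.cosh (ε/2) / Real.sinh (ε/2) with hXdef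
  have hGsplit : G = (α i : ℝ)/2 * X + R := by
    rw [hGdef, hLdef, hMdef, hRdef, Finset.sum_eq_sum_sdiff_singleton_add (mem_univ i),
      Finset.sum_sub_distrib, ← hε]
    ring
  -- bound each term of R
  have hterm : ∀ j ∈ Finset.univ \ {i},
      |((α j : ℝ)/2 * (Real.cosh ((u - x j)/2) / Real.sinh ((u - x j)/2))
        - (α j : ℝ)/2 * (Real.cosh ((u - zc j)/2) / Real.sinh ((u - zc j)/2)))|
      ≤ (α j : ℝ) * (3*ρ/10) / S^2 := by
    intro j hj
    have hji : j ≠ i := Finset.notMem_singleton.mp (Finset.mem_sdiff.mp hj).2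
    have hA1 := hsA j
    have hB1 := hsB j hji
    have hdiff : Real.cosh ((u - x j)/2) / Real.sinh ((u - x j)/2)
        - Real.cosh ((u - zc j)/2) / Real.sinh ((u - zc j)/2)
        = Real.sinh ((x j - zc j)/2)
          / (Real.sinh ((u - x j)/2) * Real.sinh ((u - zc j)/2)) := by
      rw [div_sub_div _ _ hA1 hB1]
      congr 1
      rw [show (x j - zc j)/2 = (u - zc j)/2 - (u - x j)/2 from by ring, Real.sinh_sub]
      ring
    have hnum : |Real.sinh ((x j - zc j)/2)| ≤ 6/5 * (ρ/2) := by
      rw [Real.abs_sinh]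
      calc Real.sinh |(x j - zc j)/2| ≤ Real.sinh (ρ/2) := by
            apply Real.sinh_le_sinh.mpr
            rw [abs_div, abs_two, abs_sub_comm]
            linarith [herr j]
        _ ≤ 6/5 * (ρ/2) := sinh_upper (by linarith) (by linarith)
    have hden : S * S ≤ |Real.sinh ((u - x j)/2) * Real.sinh ((u - zc j)/2)| := by
      rw [abs_mul]
      exact mul_le_mul (hsinlb _ (hfar j hji).1) (hsinlb _ (hfar j hji).2)
        hS0.le (abs_nonneg _)
    have haj0 : (0:ℝ) ≤ (α j : ℝ)/2 := by positivity
    calc |((α j : ℝ)/2 * (Real.cosh ((u - x j)/2) / Real.sinh ((u - x j)/2))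
        - (α j : ℝ)/2 * (Real.cosh ((u - zc j)/2) / Real.sinh ((u - zc j)/2)))|
        = (α j : ℝ)/2 * (|Real.sinh ((x j - zc j)/2)|
            / |Real.sinh ((u - x j)/2) * Real.sinh ((u - zc j)/2)|) := by
          rw [← mul_sub, abs_mul, abs_of_nonneg haj0, hdiff, abs_div]
      _ ≤ (α j : ℝ)/2 * ((6/5 * (ρ/2)) / (S*S)) := by
          apply mul_le_mul_of_nonneg_left _ haj0
          exact div_le_div₀ (by positivity) hnum (by positivity) hden
      _ = (α j : ℝ) * (3*ρ/10) / S^2 := by ring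
  have hβpos : (0:ℝ) ≤ 2*(n:ℝ) - (α i : ℝ) := by linarith
  have hβ : (∑ j ∈ Finset.univ \ {i}, (α j : ℝ)) = 2*(n:ℝ) - (α i : ℝ) := by
    have h := Finset.sum_sdiff_eq_sub (Finset.subset_univ ({i} : Finset (Fin m)))
      (f := fun j => (α j : ℝ))
    rw [h, Finset.sum_singleton]
    congr 1
    rw [← Nat.cast_sum, hn]; push_cast; ring
  have hRb : |R| ≤ (2*(n:ℝ) - (α i : ℝ)) * (3*ρ/10) / S^2 := by
    calc |R| ≤ ∑ j ∈ Finset.univ \ {i}, |((α j : ℝ)/2 * (Real.cosh ((u - x j)/2) / Real.sinh ((u - x j)/2))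
        - (α j : ℝ)/2 * (Real.cosh ((u - zc j)/2) / Real.sinh ((u - zc j)/2)))| := by
          rw [hRdef]; exact Finset.abs_sum_le_sum_abs _ _
      _ ≤ ∑ j ∈ Finset.univ \ {i}, (α j : ℝ) * (3*ρ/10) / S^2 := Finset.sum_le_sum hterm
      _ = (∑ j ∈ Finset.univ \ {i}, (α j : ℝ)) * (3*ρ/10) / S^2 := by
          rw [← Finset.sum_div, ← Finset.sum_mul]
      _ = (2*(n:ℝ) - (α i : ℝ)) * (3*ρ/10) / S^2 := by rw [hβ]
  -- coth bounds at ε/2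
  have ht2 : |ε/2| ≤ 1/2 := by
    rw [abs_div, abs_two]; linarith
  obtain ⟨hco1, hco2⟩ := coth_bounds (div_ne_zero hε0 two_ne_zero) ht2
  rw [← hXdef] at hco1 hco2
  -- lower bound for |G|
  set Rb := (2*(n:ℝ) - (α i : ℝ)) * (3*ρ/10) / S^2 with hRbdef
  have hplow : 0 < (α i : ℝ)/ρ - Rb := by
    rw [sub_pos, hRbdef, div_lt_div_iff₀ (by positivity) hρ0]
    exact num_plow _ _ _ _ _ ha0 hS0 hρ0 hρc hβpos hkey
  have hfcX : (α i : ℝ)/ρ ≤ |(α i : ℝ)/2 * X| := by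
    have habs1 : 1 ≤ |ε/2| * |X| := by
      rw [← abs_mul]; exact le_trans hco1 (le_abs_self _)
    rw [abs_div, abs_two] at habs1
    rw [abs_mul, abs_of_nonneg (by positivity : (0:ℝ) ≤ (α i : ℝ)/2)]
    rw [div_le_iff₀ hρ0]
    have h2 : (α i : ℝ) ≤ (α i : ℝ)/2 * |X| * |ε| := num_fcx _ _ _ ha0 habs1
    calc (α i : ℝ) ≤ (α i : ℝ)/2 * |X| * |ε| := h2
      _ ≤ (α i : ℝ)/2 * |X| * ρ := by
          apply mul_le_mul_of_nonneg_left hερ (by positivity)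
  have hGlb : (α i : ℝ)/ρ - Rb ≤ |G| := by
    have h1 : |(α i : ℝ)/2 * X| ≤ |G| + |R| := by
      calc |(α i : ℝ)/2 * X| = |G + -R| := by rw [hGsplit]; congr 1; ring
        _ ≤ |G| + |(-R)| := abs_add_le _ _
        _ = |G| + |R| := by rw [abs_neg]
    linarith [hfcX, hRb]
  have hG0 : G ≠ 0 := by
    intro h
    rw [h, abs_zero] at hGlb
    linarith
  -- the iteration formula
  have hden : (A * ∏ j, Real.sinh ((u - x j)/2) ^ α j) * L
      - (A * ∏ j, Real.sinh ((u - x j)/2) ^ α j)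
        * ((∏ j ∈ Finset.univ \ {i}, Real.sinh ((u - zc j)/2) ^ α j) * M)
        / (∏ j ∈ Finset.univ \ {i}, Real.sinh ((u - zc j)/2) ^ α j)
      = (A * ∏ j, Real.sinh ((u - x j)/2) ^ α j) * G := by
    rw [hGdef]
    field_simp
  have hzn0 : znext - x i = ((u - x i) * G - (α i : ℝ)) / G := by
    rw [hit]
    simp only [hdE, hdQ]
    rw [hden]
    have hP : (∏ j, Real.sinh ((u - x j)/2) ^ α j) ≠ 0 := right_ne_zero_of_mul hEu0
    field_simp
    ring
  have hzn : znext - x i = (ε * G - (α i : ℝ)) / G := by rw [hzn0, ← hε]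
  clear hzn0 hit hdE hdQ hterm
  -- numerator bound
  have hnum_eq : ε * G - (α i : ℝ) = (α i : ℝ) * ((ε/2) * X - 1) + ε * R := by
    rw [hGsplit]; ring
  have hnum_bd : |ε * G - (α i : ℝ)| ≤ (α i : ℝ) * (ρ^2/4) + ρ * Rb := by
    rw [hnum_eq]
    have h1 : |(α i : ℝ) * ((ε/2) * X - 1)| ≤ (α i : ℝ) * (ρ^2/4) := by
      rw [abs_mul, abs_of_nonneg (by positivity : (0:ℝ) ≤ (α i : ℝ)),
        abs_of_nonneg (by linarith : (0:ℝ) ≤ (ε/2) * X - 1)]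
      apply mul_le_mul_of_nonneg_left _ (by positivity)
      have he2 : ε^2 ≤ ρ^2 := by
        rw [← sq_abs ε]; exact pow_le_pow_left₀ (abs_nonneg _) hερ 2
      exact num_quad _ _ _ hco2 he2
    have h2 : |ε * R| ≤ ρ * Rb := by
      rw [abs_mul]
      apply mul_le_mul hερ hRb (abs_nonneg _) (by linarith)
    calc |(α i : ℝ) * ((ε/2) * X - 1) + ε * R|
        ≤ |(α i : ℝ) * ((ε/2) * X - 1)| + |ε * R| := abs_add_le _ _
      _ ≤ (α i : ℝ) * (ρ^2/4) + ρ * Rb := by linarith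
  -- final numeric inequality
  have hfin : (α i : ℝ) * (ρ^2/4) + ρ * Rb ≤ ρ^3/c^2 * ((α i : ℝ)/ρ - Rb) := by
    rw [hRbdef]
    have hS2 : (0:ℝ) < S^2 := by positivity
    have hc2 : (0:ℝ) < c^2 := by positivity
    have hmono : (2*(n:ℝ)-(α i:ℝ))*ρ^2 ≤ (2*(n:ℝ)-(α i:ℝ))*c^2 :=
      mul_le_mul_of_nonneg_left (pow_le_pow_left₀ hρ0.le hρc.le 2) hβpos
    rw [← sub_nonneg]
    have hfrac : ρ^3/c^2 * ((α i : ℝ)/ρ - (2*(n:ℝ) - (α i : ℝ)) * (3*ρ/10) / S^2)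
        - ((α i : ℝ) * (ρ^2/4) + ρ * ((2*(n:ℝ) - (α i : ℝ)) * (3*ρ/10) / S^2))
        = ((α i:ℝ)*ρ^2*S^2 - (2*(n:ℝ)-(α i:ℝ))*(3*ρ^4/10)
            - (α i:ℝ)*ρ^2*c^2*S^2/4 - (2*(n:ℝ)-(α i:ℝ))*(3*ρ^2*c^2/10)) / (S^2 * c^2) := by
      field_simp
      ring
    rw [hfrac]
    apply div_nonneg _ (by positivity)
    exact num_fin _ _ _ _ _ ha0 hS0 hρ0 hρc hc1 hc hβpos hkey
  calc |znext - x i| = |ε * G - (α i : ℝ)| / |G| := by rw [hzn, abs_div]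
    _ ≤ ((α i : ℝ) * (ρ^2/4) + ρ * Rb) / ((α i : ℝ)/ρ - Rb) :=
        div_le_div₀ (by positivity) hnum_bd hplow hGlb
    _ ≤ ρ^3/c^2 := by
        rw [div_le_iff₀ hplow]
        exact hfin

/-- Theorem 3: cubic convergence of the generalized Obreshkoff–Ehrlich method for an
exponential polynomial `E t = A * ∏ i sinh^{α i}((t - x i)/2)` of degree `n`
(`A ≠ 0`, `∑ α i = 2 n`) with pairwise distinct real roots `x i` of multiplicities `α i`. -/
theorem generalized_obreshkoff_ehrlich_exponential
    (m n : ℕ) (x : Fin m → ℝ) (hx : Function.Injective x)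
    (α : Fin m → ℕ) (hα : ∀ i, 0 < α i) (hn : (∑ i, α i) = 2 * n)
    (A : ℝ) (hA : A ≠ 0)
    (E : ℝ → ℝ) (hE : E = fun t => A * ∏ i, Real.sinh ((t - x i) / 2) ^ α i)
    (d c q S : ℝ)
    (hd : IsLeast {r : ℝ | ∃ i j : Fin m, i ≠ j ∧ r = |x i - x j|} d)
    (hq0 : 0 < q) (hq1 : q < 1) (hc : 0 < c) (hdc : 0 < d - 2 * c)
    (hS : S = Real.sinh ((d - 2 * c) / 2))
    (hineq : ∀ i : Fin m,
      c ^ 2 * (4 * (n : ℝ) + (S ^ 2 - 2) * (α i : ℝ)) < S ^ 2 * (α i : ℝ))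
    (z : ℕ → Fin m → ℝ)
    (Qi : ℕ → Fin m → ℝ → ℝ)
    (hQi : ∀ k i, Qi k i = fun t =>
      ∏ j ∈ Finset.univ \ {i}, Real.sinh ((t - z k j) / 2) ^ α j)
    (hQne : ∀ k i, Qi k i (z k i) ≠ 0)
    (hden : ∀ k i,
      deriv E (z k i) - E (z k i) * deriv (Qi k i) (z k i) / Qi k i (z k i) ≠ 0)
    (hiter : ∀ k i, z (k + 1) i = z k i - (α i : ℝ) * E (z k i) *
      (deriv E (z k i) - E (z k i) * deriv (Qi k i) (z k i) / Qi k i (z k i))⁻¹)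
    (h0 : ∀ i, |z 0 i - x i| ≤ c * q) :
    ∀ (k : ℕ) (i : Fin m), |z k i - x i| ≤ c * q ^ 3 ^ k := by
  subst hE
  have hdlb : ∀ i j : Fin m, i ≠ j → d ≤ |x i - x j| := fun i j hij =>
    hd.2 ⟨i, j, hij, rfl⟩
  intro k
  induction k with
  | zero =>
    intro i
    simpa using h0 i
  | succ k ih =>
    intro i
    have hρ0 : 0 < c * q ^ 3 ^ k := by positivity
    have hρq : c * q ^ 3 ^ k ≤ c * q := by
      apply mul_le_mul_of_nonneg_left _ hc.le
      calc q ^ 3 ^ k ≤ q ^ 1 :=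
            pow_le_pow_of_le_one hq0.le hq1.le (Nat.one_le_pow _ _ (by norm_num))
        _ = q := pow_one q
    have hit := hiter k i
    rw [hQi k i] at hit
    have hstep := one_step x α hα hn A hA d c q S (c * q ^ 3 ^ k) hdlb hq0 hq1 hc hdc hS
      hineq (z k) i hρ0 hρq ih (z (k+1) i) hit
    calc |z (k+1) i - x i| ≤ (c * q ^ 3 ^ k)^3 / c^2 := hstep
      _ = c * q ^ 3 ^ (k+1) := by
        rw [pow_succ 3 k, pow_mul]
        field_simp
end

section
/- Let f be a real polynomial, let y_1, ..., y_m be pairwise distinct real numbers, let Q(x) = ∏_{j=1}^m (x − y_j), and for each i let Q_i(x) = ∏_{j=1, j≠i}^m (x − y_j). Suppose for some i that Q_i(y_i) ≠ 0, f'(y_i) − f(y_i) Q_i'(y_i)/Q_i(y_i) ≠ 0, and f'(y_i) − (1/2) f(y_i) Q''(y_i)/Q'(y_i) ≠ 0. Then the update of the generalized method with all multiplicities equal to 1, namely y_i − f(y_i) · [ f'(y_i) − f(y_i) Q_i'(y_i)/Q_i(y_i) ]^{−1}, is equal to the classical Obreshkoff–Ehrlich update y_i − f(y_i) · [ f'(y_i)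 − (1/2) f(y_i) Q''(y_i)/Q'(y_i) ]^{−1}. -/
open Polynomial

/-- For a real polynomial `f` and pairwise distinct points `y 1, ..., y m`, with
`Q t = ∏ j (t - y j)` and `Qi i t = ∏_{j ≠ i} (t - y j)`, the update of the generalized
method with all multiplicities 1 coincides with the classical Obreshkoff–Ehrlich update. -/
theorem generalized_update_eq_obreshkoff_ehrlich_update
    (m : ℕ) (y : Fin m → ℝ) (hy : Function.Injective y)
    (P : Polynomial ℝ) (f : ℝ → ℝ) (hf : ∀ t, f t = P.eval t)
    (Q : ℝ → ℝ) (hQ : Q = fun t => ∏ j, (t - y j))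
    (Qi : Fin m → ℝ → ℝ)
    (hQi : ∀ i, Qi i = fun t => ∏ j ∈ Finset.univ \ {i}, (t - y j))
    (i : Fin m)
    (h1 : Qi i (y i) ≠ 0)
    (h2 : deriv f (y i) - f (y i) * deriv (Qi i) (y i) / Qi i (y i) ≠ 0)
    (h3 : deriv f (y i) -
      (1 / 2) * f (y i) * deriv (deriv Q) (y i) / deriv Q (y i) ≠ 0) :
    y i - f (y i) *
        (deriv f (y i) - f (y i) * deriv (Qi i) (y i) / Qi i (y i))⁻¹ =
      y i - f (y i) *
        (deriv f (y i) -
          (1 / 2) * f (y i) * deriv (deriv Q) (y i) / deriv Q (y i))⁻¹ := by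
  set q : Polynomial ℝ := ∏ j, (X - C (y j)) with hq_def
  set qi : Polynomial ℝ := ∏ j ∈ Finset.univ \ {i}, (X - C (y j)) with hqi_def
  -- Q and Qi as polynomial evaluations
  have hQeval : Q = fun t => q.eval t := by
    rw [hQ]; funext t; simp [hq_def, eval_prod]
  have hQieval : Qi i = fun t => qi.eval t := by
    rw [hQi i]; funext t; simp [hqi_def, eval_prod]
  -- factorization q = qi * (X - C (y i))
  have hfac : q = qi * (X - C (y i)) := by
    rw [hq_def, hqi_def, ← Finset.prod_sdiff (Finset.subset_univ {i})]
    simp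
  -- derivatives of Q
  have hdQ : deriv Q = fun t => q.derivative.eval t := by
    rw [hQeval]; funext t; exact Polynomial.deriv q
  have hddQ : deriv (deriv Q) (y i) = q.derivative.derivative.eval (y i) := by
    rw [hdQ]; exact Polynomial.deriv q.derivative
  have hdQi : deriv (Qi i) (y i) = qi.derivative.eval (y i) := by
    rw [hQieval]; exact Polynomial.deriv qi
  -- values at y i
  have hv1 : q.derivative.eval (y i) = qi.eval (y i) := by
    rw [hfac]; simp [derivative_mul]
  have hv2 : q.derivative.derivative.eval (y i) = 2 * qi.derivative.eval (y i) := by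
    rw [hfac]; simp [derivative_mul]; ring
  have hQival : Qi i (y i) = qi.eval (y i) := by rw [hQieval]
  have key : (1 / 2 : ℝ) * f (y i) * deriv (deriv Q) (y i) / deriv Q (y i)
      = f (y i) * deriv (Qi i) (y i) / Qi i (y i) := by
    rw [hddQ, hv2]; simp only [hdQ]; rw [hv1, hdQi, hQival]
    ring
  rw [key]
end
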